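/- Let 0 < α < 1 and for each integer l ≥ 1 define, for f ∈ L²_α[0,1], the operator (T_l f)(s) = (1/(1 − s²)) ∫_s^1 (s/r)^{l−1} f(r) r dr for s ∈ (0,1). Then each T_l is bounded on L²_α[0,1] and ‖T_l‖ ≤ 8/α², uniformly in l. -/

import Mathlib

/-!
Since `0 ≤ (s/r)^(l-1) ≤ 1`, we have `|T_l f(s)| ≤ (1-s²)⁻¹ ∫_s^1 |f(r)| r dr` uniformly in `l`.
Cauchy–Schwarz against the weight `(1-r²)^(1-α/2)`, with the exact integral
`∫_s^1 r (1-r²)^(α/2-1) dr = (1-s²)^(α/2)/α`, gives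
`|T_l f(s)|² (1-s²)^(1-α) s ≤ α⁻¹ s (1-s²)^(-1-α/2) ∫_s^1 |f(r)|² r (1-r²)^(1-α/2) dr`.
After integrating in `s` and exchanging the order of integration, the inner integral
`∫_0^r s (1-s²)^(-1-α/2) ds ≤ (1-r²)^(-α/2)/α` restores the weight `(1-r²)^(1-α)`.
Hence `‖T_l‖ ≤ 1/α ≤ 8/α²`.
-/

open MeasureTheory Real Set ENNReal NNReal

/-- The operator `T_l`, `l ≥ 1`, of the radial decomposition:
`(T_l f)(s) = (1/(1-s²)) ∫_s^1 (s/r)^(l-1) f(r) r dr`. -/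
noncomputable def Tl (l : ℕ) (f : ℝ → ℂ) (s : ℝ) : ℂ :=
  ((1 / (1 - s^2) : ℝ) : ℂ) * ∫ r in Ioo s (1:ℝ), (((s / r) ^ (l - 1) * r : ℝ) : ℂ) * f r

theorem lintegral_Ioo_ofReal_deriv_of_nonneg {g g' : ℝ → ℝ} {a b : ℝ} (hab : a ≤ b)
    (hcont : ContinuousOn g (Icc a b)) (hderiv : ∀ x ∈ Ioo a b, HasDerivAt g (g' x) x)
    (hpos : ∀ x ∈ Ioo a b, 0 ≤ g' x) :
    ∫⁻ x in Ioo a b, ENNReal.ofReal (g' x) = ENNReal.ofReal (g b - g a) := by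
  have hint := intervalIntegral.integrableOn_deriv_of_nonneg hcont hderiv hpos
  rw [setLIntegral_congr Ioo_ae_eq_Ioc, ← ofReal_integral_eq_lintegral_ofReal hint,
    ← intervalIntegral.integral_of_le hab,
    intervalIntegral.integral_eq_sub_of_hasDerivAt_of_le hab hcont hderiv
      (intervalIntegrable_iff_integrableOn_Ioc_of_le hab |>.2 hint)]
  rw [← restrict_Ioo_eq_restrict_Ioc]
  filter_upwards [ae_restrict_mem measurableSet_Ioo] with x hx
  exact hpos x hx

theorem hasDerivAt_one_sub_sq_rpow {p x : ℝ} (hx : x ^ 2 < 1) :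
    HasDerivAt (fun r => (1 - r ^ 2) ^ p) (-(2 * p) * (x * (1 - x ^ 2) ^ (p - 1))) x := by
  convert ((hasDerivAt_pow 2 x).const_sub 1).rpow_const (p := p) (Or.inl (by linarith)) using 1
  push_cast; ring

theorem lintegral_Ioo_mul_one_sub_sq_rpow {p a b : ℝ} (hp : p ≠ 0) (ha : 0 ≤ a) (hab : a ≤ b)
    (hb : b ≤ 1) (hcont : b < 1 ∨ 0 < p) :
    ∫⁻ x in Ioo a b, ENNReal.ofReal (x * (1 - x ^ 2) ^ (p - 1)) =
      ENNReal.ofReal (((1 - a ^ 2) ^ p - (1 - b ^ 2) ^ p) / (2 * p)) := by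
  set G : ℝ → ℝ := fun x => -(1 - x ^ 2) ^ p / (2 * p)
  have hsq : ∀ x ∈ Ioo a b, x ^ 2 < 1 := fun x hx => by nlinarith [hx.1, hx.2]
  have hG : ContinuousOn G (Icc a b) := by
    refine ((ContinuousOn.rpow_const (by fun_prop) fun x hx => ?_).neg).div_const _
    rcases hcont with hb1 | hp0
    · exact Or.inl (by nlinarith [hx.1, hx.2])
    · exact Or.inr hp0.le
  have hG' : ∀ x ∈ Ioo a b, HasDerivAt G (x * (1 - x ^ 2) ^ (p - 1)) x := fun x hx =>
    ((hasDerivAt_one_sub_sq_rpow (hsq x hx)).neg.div_const (2 * p)).congr_deriv (by field_simp)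
  rw [lintegral_Ioo_ofReal_deriv_of_nonneg hab hG hG' fun x hx =>
    mul_nonneg (ha.trans hx.1.le) (rpow_nonneg (by linarith [hsq x hx]) _)]
  congr 1
  ring

theorem lintegral_Ioo_zero_mul_one_sub_sq_rpow_le {p r : ℝ} (hp : 0 < p) (hr0 : 0 ≤ r)
    (hr1 : r < 1) :
    ∫⁻ s in Ioo 0 r, ENNReal.ofReal (s * (1 - s ^ 2) ^ (-p - 1)) ≤
      ENNReal.ofReal ((1 - r ^ 2) ^ (-p) / (2 * p)) := by
  rw [lintegral_Ioo_mul_one_sub_sq_rpow (neg_ne_zero.2 hp.ne') le_rfl hr0 hr1.le (Or.inl hr1)]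
  apply ENNReal.ofReal_le_ofReal
  rw [show (1 : ℝ) - 0 ^ 2 = 1 by norm_num, Real.one_rpow, mul_neg, div_neg, ← neg_div,
    div_le_div_iff_of_pos_right (by positivity)]
  linarith

theorem lintegral_mul_lintegral_Ioo_swap {μ : Measure ℝ} [SFinite μ] {Φ Ψ : ℝ → ℝ≥0∞}
    (hΦ : Measurable Φ) (hΨ : Measurable Ψ) (a b : ℝ) :
    ∫⁻ s in Ioo a b, Φ s * ∫⁻ r in Ioo s b, Ψ r ∂μ ∂μ =
      ∫⁻ r in Ioo a b, (∫⁻ s in Ioo a r, Φ s ∂μ) * Ψ r ∂μ := by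
  set K : ℝ → ℝ → ℝ≥0∞ := fun s r => {p : ℝ × ℝ | p.1 < p.2}.indicator
    (fun p => Φ p.1 * Ψ p.2) (s, r)
  have hK : Measurable (Function.uncurry K) :=
    ((hΦ.comp measurable_fst).mul (hΨ.comp measurable_snd)).indicator
      (measurableSet_lt measurable_fst measurable_snd)
  have h_inner_r : ∀ s ∈ Ioo a b,
      ∫⁻ r in Ioo a b, K s r ∂μ = Φ s * ∫⁻ r in Ioo s b, Ψ r ∂μ := by
    intro s hs
    have hKs : K s = (Ioi s).indicator fun r => Φ s * Ψ r := by
      ext r; simp [K, indicator_apply]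
    have hset : Ioi s ∩ Ioo a b = Ioo s b := by ext r; grind
    rw [hKs, lintegral_indicator measurableSet_Ioi, Measure.restrict_restrict measurableSet_Ioi,
      hset, lintegral_const_mul _ hΨ]
  have h_inner_s : ∀ r ∈ Ioo a b,
      ∫⁻ s in Ioo a b, K s r ∂μ = (∫⁻ s in Ioo a r, Φ s ∂μ) * Ψ r := by
    intro r hr
    have hKr : (fun s => K s r) = (Iio r).indicator fun s => Φ s * Ψ r := by
      ext s; simp [K, indicator_apply]
    rw [hKr, lintegral_indicator measurableSet_Iio, Measure.restrict_restrict measurableSet_Iio,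
      Iio_inter_Ioo, min_eq_left hr.2.le, lintegral_mul_const _ hΦ]
  calc ∫⁻ s in Ioo a b, Φ s * ∫⁻ r in Ioo s b, Ψ r ∂μ ∂μ
      = ∫⁻ s in Ioo a b, ∫⁻ r in Ioo a b, K s r ∂μ ∂μ :=
        (setLIntegral_congr_fun measurableSet_Ioo h_inner_r).symm
    _ = ∫⁻ r in Ioo a b, ∫⁻ s in Ioo a b, K s r ∂μ ∂μ :=
        lintegral_lintegral_swap hK.aemeasurable
    _ = ∫⁻ r in Ioo a b, (∫⁻ s in Ioo a r, Φ s ∂μ) * Ψ r ∂μ :=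
        setLIntegral_congr_fun measurableSet_Ioo h_inner_s

theorem sq_lintegral_le_of_sq_le_mul {X : Type*} [MeasurableSpace X] {μ : Measure X}
    {F A B : X → ℝ≥0∞} (hA : AEMeasurable A μ) (hB : AEMeasurable B μ)
    (hF : ∀ᵐ x ∂μ, F x ^ 2 ≤ A x * B x) :
    (∫⁻ x, F x ∂μ) ^ 2 ≤ (∫⁻ x, A x ∂μ) * ∫⁻ x, B x ∂μ := by
  have hsqrt : ∀ y : ℝ≥0∞, (y ^ (2⁻¹ : ℝ)) ^ (2 : ℝ) = y := fun y => by
    rw [← ENNReal.rpow_mul]; norm_num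
  have hF' : ∀ᵐ x ∂μ, F x ≤ A x ^ (2⁻¹ : ℝ) * B x ^ (2⁻¹ : ℝ) := by
    filter_upwards [hF] with x hx
    rw [← ENNReal.mul_rpow_of_nonneg _ _ (by norm_num), ← ENNReal.rpow_le_rpow_iff two_pos,
      hsqrt, ENNReal.rpow_two]
    exact hx
  have holder := ENNReal.lintegral_mul_le_Lp_mul_Lq μ Real.HolderConjugate.two_two
    (hA.pow_const (2⁻¹ : ℝ)) (hB.pow_const (2⁻¹ : ℝ))
  simp only [hsqrt] at holder
  calc (∫⁻ x, F x ∂μ) ^ 2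
      ≤ ((∫⁻ x, A x ∂μ) ^ (2⁻¹ : ℝ) * (∫⁻ x, B x ∂μ) ^ (2⁻¹ : ℝ)) ^ 2 := by
        gcongr
        exact (lintegral_mono_ae hF').trans (by simpa using holder)
    _ = (∫⁻ x, A x ∂μ) * ∫⁻ x, B x ∂μ := by
        rw [mul_pow, ← ENNReal.rpow_two, ← ENNReal.rpow_two, hsqrt, hsqrt]

theorem sq_lintegral_Ioo_enorm_mul_le {p s : ℝ} (hp : 0 < p) {f : ℝ → ℂ} (hf : Measurable f)
    (hs0 : 0 ≤ s) (hs1 : s ≤ 1) :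
    (∫⁻ r in Ioo s 1, ‖f r‖ₑ * ENNReal.ofReal r) ^ 2 ≤
      ENNReal.ofReal ((1 - s ^ 2) ^ p / (2 * p)) *
        ∫⁻ r in Ioo s 1, ‖f r‖ₑ ^ 2 * ENNReal.ofReal (r * (1 - r ^ 2) ^ (1 - p)) := by
  have hweight := lintegral_Ioo_mul_one_sub_sq_rpow hp.ne' hs0 hs1 le_rfl (Or.inr hp)
  rw [one_pow, sub_self, Real.zero_rpow hp.ne', sub_zero] at hweight
  rw [← hweight]
  refine sq_lintegral_le_of_sq_le_mul (by fun_prop) (by fun_prop) ?_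
  filter_upwards [ae_restrict_mem measurableSet_Ioo] with r ⟨hsr, hr1⟩
  have hr0 : 0 < r := hs0.trans_lt hsr
  have hr2 : 0 < 1 - r ^ 2 := by nlinarith
  have hprod : r * (1 - r ^ 2) ^ (p - 1) * (r * (1 - r ^ 2) ^ (1 - p)) = r ^ 2 := by
    rw [mul_mul_mul_comm, ← rpow_add hr2]; norm_num; ring
  rw [mul_pow, mul_left_comm, ← ENNReal.ofReal_mul (by positivity), hprod,
    ENNReal.ofReal_pow hr0.le, mul_comm]

theorem Complex.enorm_ofReal_of_nonneg {x : ℝ} (hx : 0 ≤ x) :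
    ‖(x : ℂ)‖ₑ = ENNReal.ofReal x := by
  rw [← ofReal_norm, Complex.norm_real, Real.norm_of_nonneg hx]

theorem enorm_Tl_le (l : ℕ) (f : ℝ → ℂ) {s : ℝ} (hs0 : 0 ≤ s) (hs1 : s < 1) :
    ‖Tl l f s‖ₑ ≤
      ENNReal.ofReal (1 / (1 - s ^ 2)) * ∫⁻ r in Ioo s 1, ‖f r‖ₑ * ENNReal.ofReal r := by
  have hs2 : 0 < 1 - s ^ 2 := by nlinarith
  rw [Tl, enorm_mul, Complex.enorm_ofReal_of_nonneg (by positivity)]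
  gcongr
  refine (enorm_integral_le_lintegral_enorm _).trans (setLIntegral_mono' measurableSet_Ioo ?_)
  rintro r ⟨hsr, -⟩
  have hr0 : 0 < r := hs0.trans_lt hsr
  have hkernel : (s / r) ^ (l - 1) ≤ 1 :=
    pow_le_one₀ (by positivity) ((div_le_one hr0).2 hsr.le)
  rw [enorm_mul, Complex.enorm_ofReal_of_nonneg (by positivity), mul_comm]
  gcongr
  exact mul_le_of_le_one_left hr0.le hkernel

theorem enorm_Tl_sq_mul_weight_le (l : ℕ) {α : ℝ} (hα : 0 < α) {f : ℝ → ℂ}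
    (hf : Measurable f) {s : ℝ} (hs0 : 0 ≤ s) (hs1 : s < 1) :
    ‖Tl l f s‖ₑ ^ 2 * ENNReal.ofReal ((1 - s ^ 2) ^ (1 - α) * s) ≤
      ENNReal.ofReal α⁻¹ * (ENNReal.ofReal (s * (1 - s ^ 2) ^ (-(α / 2) - 1)) *
        ∫⁻ r in Ioo s 1, ‖f r‖ₑ ^ 2 * ENNReal.ofReal (r * (1 - r ^ 2) ^ (1 - α / 2))) := by
  set x := 1 - s ^ 2
  have hx : 0 < x := by nlinarith
  have hexp : x ^ (-(α / 2) - 1) = x ^ (α / 2) * x ^ (1 - α) / x ^ 2 := by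
    rw [_root_.eq_div_iff (by positivity), ← Real.rpow_natCast, ← rpow_add hx, ← rpow_add hx]
    norm_num; ring_nf
  have hcoef : (1 / x) ^ 2 * (x ^ (α / 2) / (2 * (α / 2))) * (x ^ (1 - α) * s) =
      α⁻¹ * (s * x ^ (-(α / 2) - 1)) := by
    rw [hexp]; field_simp
  calc ‖Tl l f s‖ₑ ^ 2 * ENNReal.ofReal (x ^ (1 - α) * s)
      ≤ ENNReal.ofReal (1 / x) ^ 2 * (∫⁻ r in Ioo s 1, ‖f r‖ₑ * ENNReal.ofReal r) ^ 2 *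
          ENNReal.ofReal (x ^ (1 - α) * s) := by
        rw [← mul_pow]; gcongr; exact enorm_Tl_le l f hs0 hs1
    _ ≤ ENNReal.ofReal (1 / x) ^ 2 * (ENNReal.ofReal (x ^ (α / 2) / (2 * (α / 2))) *
          ∫⁻ r in Ioo s 1, ‖f r‖ₑ ^ 2 * ENNReal.ofReal (r * (1 - r ^ 2) ^ (1 - α / 2))) *
          ENNReal.ofReal (x ^ (1 - α) * s) := by
        gcongr; exact sq_lintegral_Ioo_enorm_mul_le (by positivity) hf hs0 hs1.le
    _ = ENNReal.ofReal ((1 / x) ^ 2 * (x ^ (α / 2) / (2 * (α / 2))) * (x ^ (1 - α) * s)) *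
          ∫⁻ r in Ioo s 1, ‖f r‖ₑ ^ 2 * ENNReal.ofReal (r * (1 - r ^ 2) ^ (1 - α / 2)) := by
        rw [ENNReal.ofReal_mul
            (by positivity : 0 ≤ (1 / x) ^ 2 * (x ^ (α / 2) / (2 * (α / 2)))),
          ENNReal.ofReal_mul (by positivity : 0 ≤ (1 / x) ^ 2),
          ENNReal.ofReal_pow (by positivity : 0 ≤ 1 / x)]
        ring
    _ = _ := by rw [hcoef, ENNReal.ofReal_mul (by positivity), mul_assoc]

theorem lintegral_enorm_Tl_sq_mul_weight_le (l : ℕ) {α : ℝ} (hα : 0 < α) {f : ℝ → ℂ}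
    (hf : Measurable f) :
    ∫⁻ s in Ioo 0 1, ‖Tl l f s‖ₑ ^ 2 * ENNReal.ofReal ((1 - s ^ 2) ^ (1 - α) * s) ≤
      ENNReal.ofReal (α⁻¹ ^ 2) *
        ∫⁻ r in Ioo 0 1, ‖f r‖ₑ ^ 2 * ENNReal.ofReal ((1 - r ^ 2) ^ (1 - α) * r) := by
  set Φ : ℝ → ℝ≥0∞ := fun s => ENNReal.ofReal (s * (1 - s ^ 2) ^ (-(α / 2) - 1))
  set Ψ : ℝ → ℝ≥0∞ := fun r => ‖f r‖ₑ ^ 2 * ENNReal.ofReal (r * (1 - r ^ 2) ^ (1 - α / 2))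
  have hΦ : Measurable Φ := by fun_prop
  have hΨ : Measurable Ψ := by fun_prop
  have hinner : ∀ r ∈ Ioo (0 : ℝ) 1, (∫⁻ s in Ioo 0 r, Φ s) * Ψ r ≤
      ENNReal.ofReal α⁻¹ * (‖f r‖ₑ ^ 2 * ENNReal.ofReal ((1 - r ^ 2) ^ (1 - α) * r)) := by
    rintro r ⟨hr0, hr1⟩
    have hr2 : 0 < 1 - r ^ 2 := by nlinarith
    have hcoef : (1 - r ^ 2) ^ (-(α / 2)) / (2 * (α / 2)) * (r * (1 - r ^ 2) ^ (1 - α / 2)) =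
        α⁻¹ * ((1 - r ^ 2) ^ (1 - α) * r) := by
      have hexp :
          (1 - r ^ 2) ^ (-(α / 2)) * (1 - r ^ 2) ^ (1 - α / 2) = (1 - r ^ 2) ^ (1 - α) := by
        rw [← rpow_add hr2]; ring_nf
      rw [← hexp]; field_simp
    calc (∫⁻ s in Ioo 0 r, Φ s) * Ψ r
        ≤ ENNReal.ofReal ((1 - r ^ 2) ^ (-(α / 2)) / (2 * (α / 2))) * Ψ r := by
          gcongr; exact lintegral_Ioo_zero_mul_one_sub_sq_rpow_le (by positivity) hr0.le hr1
      _ = _ := by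
          rw [mul_left_comm, ← ENNReal.ofReal_mul (by positivity), hcoef,
            ENNReal.ofReal_mul (by positivity), mul_left_comm]
  calc ∫⁻ s in Ioo 0 1, ‖Tl l f s‖ₑ ^ 2 * ENNReal.ofReal ((1 - s ^ 2) ^ (1 - α) * s)
      ≤ ∫⁻ s in Ioo 0 1, ENNReal.ofReal α⁻¹ * (Φ s * ∫⁻ r in Ioo s 1, Ψ r) :=
        setLIntegral_mono' measurableSet_Ioo fun s hs =>
          enorm_Tl_sq_mul_weight_le l hα hf hs.1.le hs.2
    _ = ENNReal.ofReal α⁻¹ * ∫⁻ r in Ioo 0 1, (∫⁻ s in Ioo 0 r, Φ s) * Ψ r := by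
        rw [lintegral_const_mul' _ _ ofReal_ne_top, lintegral_mul_lintegral_Ioo_swap hΦ hΨ]
    _ ≤ ENNReal.ofReal α⁻¹ * ∫⁻ r in Ioo 0 1,
          ENNReal.ofReal α⁻¹ * (‖f r‖ₑ ^ 2 * ENNReal.ofReal ((1 - r ^ 2) ^ (1 - α) * r)) := by
        gcongr _ * ?_; exact setLIntegral_mono' measurableSet_Ioo hinner
    _ = _ := by
        rw [lintegral_const_mul' _ _ ofReal_ne_top, ← mul_assoc,
          ← ENNReal.ofReal_mul (by positivity), sq]

theorem stmt11_general (α : ℝ) (hα0 : 0 < α) (hα1 : α < 1) (l : ℕ)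
    (f : ℝ → ℂ) (hf : Measurable f) :
    ∫⁻ s in Ioo (0:ℝ) 1,
        (‖Tl l f s‖₊ : ℝ≥0∞)^2 * ENNReal.ofReal ((1 - s^2) ^ (1 - α) * s)
      ≤ ENNReal.ofReal ((8 / α^2)^2) *
        ∫⁻ r in Ioo (0:ℝ) 1,
          (‖f r‖₊ : ℝ≥0∞)^2 * ENNReal.ofReal ((1 - r^2) ^ (1 - α) * r) := by
  refine (lintegral_enorm_Tl_sq_mul_weight_le l hα0 hf).trans ?_
  gcongr ?_ * _
  refine ENNReal.ofReal_le_ofReal ?_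
  have hα2 : α ^ 2 ≤ 1 := by nlinarith
  rw [inv_pow, div_pow, inv_le_iff_one_le_mul₀ (by positivity)]
  field_simp
  nlinarith

theorem stmt11 (α : ℝ) (hα0 : 0 < α) (hα1 : α < 1) (l : ℕ) (hl : 1 ≤ l)
    (f : ℝ → ℂ) (hf : Measurable f)
    (hf2 : (∫⁻ r in Ioo (0:ℝ) 1,
        (‖f r‖₊ : ℝ≥0∞)^2 * ENNReal.ofReal ((1 - r^2) ^ (1 - α) * r)) < ⊤) :
    ∫⁻ s in Ioo (0:ℝ) 1,
        (‖Tl l f s‖₊ : ℝ≥0∞)^2 * ENNReal.ofReal ((1 - s^2) ^ (1 - α) * s)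
      ≤ ENNReal.ofReal ((8 / α^2)^2) *
        ∫⁻ r in Ioo (0:ℝ) 1,
          (‖f r‖₊ : ℝ≥0∞)^2 * ENNReal.ofReal ((1 - r^2) ^ (1 - α) * r) :=
  stmt11_general α hα0 hα1 l f hf
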